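/- In a network N, a node v is an ambiguous leaf (i.e., v is a leaf in some rooted partner of N but not in all of them) if and only if v lies in a root component of N, is incident to exactly one undirected edge, and has no incident directed edges (in-degree and out-degree 0). -/

import Mathlib

open Relation

/-- A semidirected graph: a set of undirected edges and a set of directed edges. -/
structure SDG (V : Type) where
  undir : Finset (Sym2 V)
  dir : Finset (V × V)

namespace SDG

variable {V : Type} [DecidableEq V]

/-- one step along a directed edge -/
def dstep (N : SDG V) (u v : V) : Prop := (u, v) ∈ N.dir

/-- one step along an undirected edge -/
def ustep (N : SDG V) (u v : V) : Prop := s(u, v) ∈ N.undir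

/-- one step of a semidirected path -/
def sstep (N : SDG V) (u v : V) : Prop := N.dstep u v ∨ N.ustep u v

/-- directed reachability (existence of a directed path) -/
def dreach (N : SDG V) : V → V → Prop := ReflTransGen N.dstep

/-- reachability using undirected edges only -/
def ureach (N : SDG V) : V → V → Prop := ReflTransGen N.ustep

/-- semidirected reachability (existence of a semidirected path) -/
def sreach (N : SDG V) : V → V → Prop := ReflTransGen N.sstep

/-- `M` is obtained from `N` by directing some of the undirected edges of `N`
(each such edge receiving exactly one direction). -/
def Directs (N M : SDG V) : Prop :=
  M.undir ⊆ N.undir ∧ N.dir ⊆ M.dir ∧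
    (∀ e ∈ M.dir, e ∉ N.dir → s(e.1, e.2) ∈ N.undir ∧ s(e.1, e.2) ∉ M.undir) ∧
    (∀ p ∈ N.undir, p ∉ M.undir →
      ∃! e : V × V, e ∈ M.dir ∧ e ∉ N.dir ∧ s(e.1, e.2) = p)

/-- a semidirected graph is directed when it has no undirected edges -/
def IsDirected (N : SDG V) : Prop := N.undir = ∅

/-- existence of a directed cycle -/
def HasDirCycle (N : SDG V) : Prop := ∃ e ∈ N.dir, N.dreach e.2 e.1

/-- `N` is acyclic if no compatible directed graph (obtained by directing all
undirected edges) has a directed cycle. -/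
def Acyclic (N : SDG V) : Prop :=
  ∀ G : SDG V, Directs N G → G.IsDirected → ¬ G.HasDirCycle

/-- in-degree: number of incoming directed edges -/
def ideg (N : SDG V) (v : V) : ℕ := (N.dir.filter fun e => e.2 = v).card

/-- out-degree: number of outgoing directed edges -/
def odeg (N : SDG V) (v : V) : ℕ := (N.dir.filter fun e => e.1 = v).card

/-- number of incident undirected edges -/
def udeg (N : SDG V) (v : V) : ℕ := (N.undir.filter fun p => v ∈ p).card

/-- total degree -/
def deg (N : SDG V) (v : V) : ℕ := N.ideg v + N.odeg v + N.udeg v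

/-- hybrid edges: directed edges whose child is a hybrid node (in-degree ≥ 2) -/
def hybridEdges (N : SDG V) : Finset (V × V) := N.dir.filter fun e => 2 ≤ N.ideg e.2

/-- no self-loops, and no undirected edge parallel to a directed edge -/
def Proper (N : SDG V) : Prop :=
  (∀ p ∈ N.undir, ¬ p.IsDiag) ∧ (∀ e ∈ N.dir, e.1 ≠ e.2) ∧
    ∀ e ∈ N.dir, s(e.1, e.2) ∉ N.undir

/-- `M` is phylogenetically compatible with `N`: `M` is an SDAG obtained from
`N` by directing some undirected edges, keeping the same hybrid edges. -/
def PhyloCompat (M N : SDG V) : Prop :=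
  Directs N M ∧ M.Acyclic ∧ M.hybridEdges = N.hybridEdges

/-- a rooted partner of `N`: a DAG phylogenetically compatible with `N` -/
def RootedPartner (G N : SDG V) : Prop := PhyloCompat G N ∧ G.IsDirected

/-- a network: an SDAG admitting a rooted partner -/
def IsNetwork (N : SDG V) : Prop := N.Acyclic ∧ ∃ G : SDG V, RootedPartner G N

/-- mutual semidirected reachability (same undirected component) -/
def sim (N : SDG V) (u v : V) : Prop := N.sreach u v ∧ N.sreach v u

/-- `v` lies in a root component: its undirected component is maximal for the
semidirected-path preorder -/
def InRootComp (N : SDG V) (v : V) : Prop := ∀ u, N.sreach u v → N.sreach v u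

/-- the undirected simple graph induced by the undirected edges -/
def undirGraph (N : SDG V) : SimpleGraph V :=
  SimpleGraph.fromEdgeSet (N.undir : Set (Sym2 V))

/-- leaf in some rooted partner -/
def IsUnrootedLeaf (N : SDG V) (v : V) : Prop :=
  ∃ G : SDG V, RootedPartner G N ∧ G.odeg v = 0

/-- leaf in every rooted partner -/
def IsRootedLeaf (N : SDG V) (v : V) : Prop :=
  ∀ G : SDG V, RootedPartner G N → G.odeg v = 0

/-- a leaf-labeled network: a network whose unrooted leaves are all rooted leaves
(so that its leaf set is stable across rooted partners and can be labeled) -/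
def LNetwork (N : SDG V) : Prop :=
  IsNetwork N ∧ ∀ v, IsUnrootedLeaf N v → IsRootedLeaf N v

/-- `l` is (the list of nodes of) a directed path from `u` to `v` in `G` -/
def IsDPathList (G : SDG V) (u v : V) (l : List V) : Prop :=
  l.head? = some u ∧ l.getLast? = some v ∧ l.Chain' G.dstep

/-- the number of directed paths from `u` to `v` -/
noncomputable def pathCount (G : SDG V) (u v : V) : ℕ :=
  Set.ncard {l : List V | IsDPathList G u v l}

/-- the set of directed paths starting at `v` -/
def startPaths (G : SDG V) (v : V) : Set (List V) :=
  {l : List V | l.head? = some v ∧ l.Chain' G.dstep}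

/-- a root choice function: picks one node in each root component, constant on
root components, and the identity outside of root components -/
def RootChoice (N : SDG V) (ρ : V → V) : Prop :=
  (∀ v, InRootComp N v → sim N v (ρ v) ∧ ∀ u, InRootComp N u → sim N u v → ρ u = ρ v) ∧
    ∀ v, ¬ InRootComp N v → ρ v = v

/-- `G` is the rooted partner of `N` whose set of roots (in-degree 0 nodes) is the
image of the root choice function `ρ` -/
def PartnerFor (N : SDG V) (ρ : V → V) (G : SDG V) : Prop :=
  RootedPartner G N ∧ {v | G.ideg v = 0} = ρ '' {v | InRootComp N v}

-- the directional μ-vector of `(u, v)`: path counts from `v` to each node in any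
-- rooted partner directing the edge `uv` as `(u, v)`
open Classical in
noncomputable def muD (N : SDG V) (u v : V) : V → ℕ :=
  if h : ∃ G : SDG V, RootedPartner G N ∧ (u, v) ∈ G.dir then
    fun x => pathCount h.choose v x
  else fun _ => 0

-- the root μ-vector of the root component of `t`
open Classical in
noncomputable def muR (N : SDG V) (t : V) : V → ℕ :=
  if h : ∃ p : (V → V) × SDG V, RootChoice N p.1 ∧ PartnerFor N p.1 p.2 then
    fun x => pathCount h.choose.2 (h.choose.1 t) x
  else fun _ => 0

/-- a DAG is tree-child if every non-leaf node has a tree-node child -/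
def TreeChildDAG (G : SDG V) : Prop :=
  ∀ v, 0 < G.odeg v → ∃ w, (v, w) ∈ G.dir ∧ G.ideg w ≤ 1

/-- all rooted partners are tree-child -/
def StronglyTreeChild (N : SDG V) : Prop :=
  ∀ G : SDG V, RootedPartner G N → TreeChildDAG G

/-- some rooted partner is tree-child -/
def WeaklyTreeChild (N : SDG V) : Prop :=
  ∃ G : SDG V, RootedPartner G N ∧ TreeChildDAG G

/-- coordinatewise comparison of μ-vectors over the leaves of `N` -/
def muLE (N : SDG V) (m m' : V → ℕ) : Prop :=
  ∀ x, IsUnrootedLeaf N x → m x ≤ m' x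

/-- incomparability of μ-vectors (over the leaves of `N`) -/
def muIncomp (N : SDG V) (m m' : V → ℕ) : Prop :=
  ¬ muLE N m m' ∧ ¬ muLE N m' m

/-- a network is complete when every undirected edge lies in a root component
(equivalently, it equals its completion) -/
def Complete (N : SDG V) : Prop := ∀ p ∈ N.undir, ∀ v ∈ p, InRootComp N v

/-- reachability by a tree path (directed path whose edges are all tree edges) -/
def treeReach (G : SDG V) : V → V → Prop :=
  ReflTransGen fun a b => (a, b) ∈ G.dir ∧ G.ideg b ≤ 1

/-- `v` has a tree descendant leaf -/
def HasTreeDescLeaf (G : SDG V) (v : V) : Prop := ∃ x, G.odeg x = 0 ∧ treeReach G v x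

/-- `l` is an elementary path from `u` to `v`: a directed path whose first node
has out-degree 1 and whose intermediate nodes have in- and out-degree 1 -/
def IsElemPathList (G : SDG V) (u v : V) (l : List V) : Prop :=
  l.head? = some u ∧ l.getLast? = some v ∧ l.Chain' G.dstep ∧ 2 ≤ l.length ∧
    G.odeg u = 1 ∧ ∀ w ∈ (l.drop 1).dropLast, G.ideg w = 1 ∧ G.odeg w = 1

/-- an elementary node: a tree node with out-degree = total degree = 1, or
out-degree < total degree = 2 -/
def IsElemNode (G : SDG V) (v : V) : Prop :=
  G.ideg v ≤ 1 ∧ ((G.odeg v = 1 ∧ G.deg v = 1) ∨ (G.odeg v < G.deg v ∧ G.deg v = 2))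

/-- the setoid identifying nodes connected by undirected edges -/
def usetoid (N : SDG V) : Setoid V :=
  ⟨Relation.EqvGen N.ustep, Relation.EqvGen.is_equivalence _⟩

/-- the edge relation of the contraction of `N`: the directed graph on the
quotient by undirected connectivity, with the directed edges of `N` -/
def crel (N : SDG V) (x y : Quotient N.usetoid) : Prop :=
  ∃ u v : V, (u, v) ∈ N.dir ∧ Quotient.mk N.usetoid u = x ∧ Quotient.mk N.usetoid v = y

section Aux18
set_option linter.unusedSectionVars false

variable {N G : SDG V}

lemma mem_ideg {a b : V} (h : (a, b) ∈ G.dir) : G.ideg b ≠ 0 :=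
  Finset.card_ne_zero_of_mem (Finset.mem_filter.mpr ⟨h, rfl⟩)

lemma mem_odeg {a b : V} (h : (a, b) ∈ G.dir) : G.odeg a ≠ 0 :=
  Finset.card_ne_zero_of_mem (Finset.mem_filter.mpr ⟨h, rfl⟩)

lemma exists_in_of_ideg {b : V} (h : G.ideg b ≠ 0) : ∃ a, (a, b) ∈ G.dir := by
  obtain ⟨⟨a, b'⟩, he⟩ := Finset.card_ne_zero.mp h
  rw [Finset.mem_filter] at he
  obtain ⟨h1, h2⟩ := he
  subst h2
  exact ⟨a, h1⟩

lemma exists_out_of_odeg {a : V} (h : G.odeg a ≠ 0) : ∃ b, (a, b) ∈ G.dir := by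
  obtain ⟨⟨a', b⟩, he⟩ := Finset.card_ne_zero.mp h
  rw [Finset.mem_filter] at he
  obtain ⟨h1, h2⟩ := he
  subst h2
  exact ⟨b, h1⟩

lemma ideg_le_one_eq {b a₁ a₂ : V} (h : G.ideg b ≤ 1) (h1 : (a₁, b) ∈ G.dir)
    (h2 : (a₂, b) ∈ G.dir) : a₁ = a₂ := by
  have := Finset.card_le_one.mp h (a₁, b) (Finset.mem_filter.mpr ⟨h1, rfl⟩)
    (a₂, b) (Finset.mem_filter.mpr ⟨h2, rfl⟩)
  exact (Prod.ext_iff.mp this).1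

lemma two_le_ideg {b a₁ a₂ : V} (h1 : (a₁, b) ∈ G.dir) (h2 : (a₂, b) ∈ G.dir)
    (hne : a₁ ≠ a₂) : 2 ≤ G.ideg b :=
  Finset.one_lt_card.mpr ⟨_, Finset.mem_filter.mpr ⟨h1, rfl⟩, _,
    Finset.mem_filter.mpr ⟨h2, rfl⟩, by simp [hne]⟩

lemma rp_dirsub (hG : RootedPartner G N) : N.dir ⊆ G.dir := hG.1.1.2.1

lemma rp_new (hG : RootedPartner G N) {e : V × V} (he : e ∈ G.dir) (hn : e ∉ N.dir) :
    s(e.1, e.2) ∈ N.undir := (hG.1.1.2.2.1 e he hn).1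

lemma rp_orient (hG : RootedPartner G N) {p : Sym2 V} (hp : p ∈ N.undir) :
    ∃! e : V × V, e ∈ G.dir ∧ e ∉ N.dir ∧ s(e.1, e.2) = p :=
  hG.1.1.2.2.2 p hp (by rw [hG.2]; exact Finset.notMem_empty p)

lemma rp_hyb (hG : RootedPartner G N) : G.hybridEdges = N.hybridEdges := hG.1.2.2

lemma proper_ne (hP : N.Proper) {a b : V} (h : s(a, b) ∈ N.undir) : a ≠ b :=
  fun he => hP.1 _ h (by rw [he]; exact Sym2.mk_isDiag_iff.mpr rfl)

lemma dir_not_undir (hP : N.Proper) {e : V × V} (h : e ∈ N.dir) : s(e.1, e.2) ∉ N.undir :=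
  hP.2.2 e h

lemma not_both (hP : N.Proper) (hG : RootedPartner G N) {a b : V}
    (h1 : (a, b) ∈ G.dir) (hn1 : (a, b) ∉ N.dir) (h2 : (b, a) ∈ G.dir) : False := by
  have hu : s(a, b) ∈ N.undir := rp_new hG h1 hn1
  have hn2 : (b, a) ∉ N.dir := fun h =>
    dir_not_undir hP h (by rw [show s((b,a).1, (b,a).2) = s(a, b) from Sym2.eq_swap]; exact hu)
  obtain ⟨e, _, hu'⟩ := rp_orient hG hu
  have e1 := hu' (a, b) ⟨h1, hn1, rfl⟩
  have e2 := hu' (b, a) ⟨h2, hn2, Sym2.eq_swap⟩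
  exact proper_ne hP hu (Prod.ext_iff.mp (e1.trans e2.symm)).1

lemma hyb_le_one (hG : RootedPartner G N) {a b : V} (h : (a, b) ∈ G.dir)
    (hn : (a, b) ∉ N.dir) : G.ideg b ≤ 1 := by
  by_contra hc
  have h2 : (a, b) ∈ G.hybridEdges := Finset.mem_filter.mpr ⟨h, show 2 ≤ G.ideg b by omega⟩
  rw [rp_hyb hG] at h2
  exact hn (Finset.mem_filter.mp h2).1

lemma not_cycle (hG : RootedPartner G N) : ¬ G.HasDirCycle := by
  refine hG.1.2.1 G ⟨subset_rfl, subset_rfl, ?_, ?_⟩ hG.2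
  · exact fun e he hne => absurd he hne
  · exact fun p hp hnp => absurd hp hnp

lemma mk_rp {G' : SDG V} (hu : G'.undir = ∅) (hd : Directs N G')
    (hh : G'.hybridEdges = N.hybridEdges) (hnc : ¬ G'.HasDirCycle) :
    RootedPartner G' N := by
  refine ⟨⟨hd, ?_, hh⟩, hu⟩
  intro H hDH hIH hcyc
  have hdir : H.dir = G'.dir := by
    refine Finset.Subset.antisymm ?_ hDH.2.1
    intro e he
    by_contra hne
    exact Finset.notMem_empty _ (hu ▸ (hDH.2.2.1 e he hne).1)
  obtain ⟨e, he, hr⟩ := hcyc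
  refine hnc ⟨e, hdir ▸ he, ?_⟩
  exact Relation.ReflTransGen.mono (fun a b hab => by
    show (a, b) ∈ G'.dir; rw [← hdir]; exact hab) _ _ hr

end Aux18
section Aux18b
set_option linter.unusedSectionVars false
variable {N G : SDG V}

lemma rtg_chain {R : V → V → Prop} {a b : V} (h : Relation.ReflTransGen R a b) :
    ∃ l : List V, List.Chain R a l ∧ (a :: l).getLast? = some b := by
  induction h using Relation.ReflTransGen.head_induction_on with
  | refl => exact ⟨[], List.Chain.nil, by simp⟩
  | head h' _ ih =>
    obtain ⟨l, hc, hl⟩ := ih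
    exact ⟨_ :: l, List.Chain.cons h' hc, by rwa [List.getLast?_cons_cons]⟩

lemma chain_rtg {R : V → V → Prop} : ∀ {l : List V} {a b : V},
    List.Chain R a l → (a :: l).getLast? = some b → Relation.ReflTransGen R a b := by
  intro l
  induction l with
  | nil =>
    intro a b _ h
    simp only [List.getLast?_singleton, Option.some_inj] at h
    subst h; exact .refl
  | cons c l ih =>
    intro a b hc hl
    unfold List.Chain at hc
    rw [List.chain_cons] at hc
    exact .head hc.1 (ih hc.2 (by rwa [List.getLast?_cons_cons] at hl))

lemma chain_pairs {R : V → V → Prop} : ∀ {l : List V} {a : V},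
    List.Chain R a l → ∀ e ∈ (a :: l).zip l, R e.1 e.2 := by
  intro l
  induction l with
  | nil => intro a _ e he; simp at he
  | cons c l ih =>
    intro a hc e he
    unfold List.Chain at hc
    rw [List.chain_cons] at hc
    rw [List.zip_cons_cons] at he
    rcases List.mem_cons.mp he with h | h
    · rw [h]; exact hc.1
    · exact ih hc.2 e h

lemma pairs_chain {S : V → V → Prop} : ∀ {l : List V} {a : V},
    (∀ e ∈ (a :: l).zip l, S e.1 e.2) → List.Chain S a l := by
  intro l
  induction l with
  | nil => intro a _; exact .nil
  | cons c l ih =>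
    intro a h
    unfold List.Chain
    rw [List.chain_cons]
    refine ⟨h (a, c) (by rw [List.zip_cons_cons]; exact List.mem_cons_self), ?_⟩
    exact ih fun e he => h e (by rw [List.zip_cons_cons]; exact List.mem_cons.mpr (.inr he))

lemma mem_zip_tail : ∀ {m : List V} {x y : V}, (x, y) ∈ m.zip m.tail →
    ∃ i, m[i]? = some x ∧ m[i + 1]? = some y := by
  intro m
  induction m with
  | nil => simp
  | cons a t ih =>
    intro x y h
    cases t with
    | nil => simp at h
    | cons c t' =>
      rw [List.tail_cons, List.zip_cons_cons] at h
      rcases List.mem_cons.mp h with h | h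
      · obtain ⟨h1, h2⟩ := Prod.ext_iff.mp h
        exact ⟨0, by simpa using h1.symm, by simpa using h2.symm⟩
      · obtain ⟨i, h1, h2⟩ := ih h
        exact ⟨i + 1, by simpa using h1, by simpa using h2⟩

lemma no_swap {m : List V} (hm : m.Nodup) {a b : V}
    (h1 : (a, b) ∈ m.zip m.tail) (h2 : (b, a) ∈ m.zip m.tail) : False := by
  obtain ⟨i, hi1, hi2⟩ := mem_zip_tail h1
  obtain ⟨j, hj1, hj2⟩ := mem_zip_tail h2
  have hb1 : i + 1 < m.length := (List.getElem?_eq_some_iff.mp hi2).1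
  have hb2 : j + 1 < m.length := (List.getElem?_eq_some_iff.mp hj2).1
  have e1 : i + 1 = j := (List.getElem?_inj hb1 hm).mp (by rw [hi2, hj1])
  have e2 : j + 1 = i := (List.getElem?_inj hb2 hm).mp (by rw [hj2, hi1])
  omega

lemma dup_split : ∀ {l : List V}, ¬ l.Nodup →
    ∃ (s1 s2 s3 : List V) (a : V), l = s1 ++ a :: s2 ++ a :: s3 := by
  intro l
  induction l with
  | nil => intro h; exact absurd List.nodup_nil h
  | cons a t ih =>
    intro h
    rw [List.nodup_cons] at h
    push_neg at h
    by_cases ha : a ∈ t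
    · obtain ⟨s2, s3, rfl⟩ := List.append_of_mem ha
      exact ⟨[], s2, s3, a, by simp⟩
    · obtain ⟨s1, s2, s3, b, rfl⟩ := ih (h ha)
      exact ⟨a :: s1, s2, s3, b, by simp⟩

end Aux18b
section Aux18c
set_option linter.unusedSectionVars false
variable {N G : SDG V}

lemma getLast?_append_cons (s t : List V) (a : V) :
    (s ++ a :: t).getLast? = (a :: t).getLast? :=
  List.getLast?_append_of_ne_nil s (by simp)

lemma getLast?_cons_append_cons (s t : List V) (a b : V) :
    (b :: (s ++ a :: t)).getLast? = (a :: t).getLast? := by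
  rw [← List.cons_append]
  exact getLast?_append_cons (b :: s) t a

lemma not_sreach_of_dir (hP : N.Proper) (hN : IsNetwork N) {x u : V}
    (hxu : (x, u) ∈ N.dir) : ¬ N.sreach u x := by
  classical
  obtain ⟨hacy, G0, hG0⟩ := hN
  intro hsr
  obtain ⟨l0, hc0, hl0⟩ := rtg_chain hsr
  suffices h : ∀ n (l : List V), l.length ≤ n → List.Chain N.sstep u l →
      (u :: l).getLast? = some x → False from h l0.length l0 le_rfl hc0 hl0
  intro n
  induction n with
  | zero =>
    intro l hl hc hlast
    have hnil : l = [] := List.length_eq_zero_iff.mp (Nat.le_zero.mp hl)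
    subst hnil
    simp only [List.getLast?_singleton, Option.some_inj] at hlast
    exact hP.2.1 (x, u) hxu hlast.symm
  | succ n ih =>
    intro l hl hc hlast
    by_cases hnd : (u :: l).Nodup
    · -- Nodup: build a directing of N with a directed cycle
      set pl : List (V × V) := (u :: l).zip l with hpl
      set WP : Finset (V × V) := pl.toFinset.filter (fun e => s(e.1, e.2) ∈ N.undir) with hWP
      set WS : Finset (Sym2 V) := WP.image (fun e => s(e.1, e.2)) with hWS
      set D : Finset (V × V) := (G0.dir.filter (fun e => s(e.1, e.2) ∉ WS)) ∪ WP with hD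
      set G2 : SDG V := ⟨∅, D⟩ with hG2
      have hWPpl : ∀ e ∈ WP, e ∈ pl := fun e he => List.mem_toFinset.mp (Finset.mem_filter.mp he).1
      have hWPu : ∀ e ∈ WP, s(e.1, e.2) ∈ N.undir := fun e he => (Finset.mem_filter.mp he).2
      have hWSu : ∀ p ∈ WS, p ∈ N.undir := by
        intro p hp
        obtain ⟨e, he, rfl⟩ := Finset.mem_image.mp hp
        exact hWPu e he
      have hNsub : N.dir ⊆ D := by
        intro e he
        refine Finset.mem_union_left _ (Finset.mem_filter.mpr ⟨rp_dirsub hG0 he, ?_⟩)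
        exact fun hws => dir_not_undir hP he (hWSu _ hws)
      have hdirects : Directs N G2 := by
        refine ⟨Finset.empty_subset _, hNsub, ?_, ?_⟩
        · intro e he hne
          refine ⟨?_, Finset.notMem_empty _⟩
          rcases Finset.mem_union.mp he with h | h
          · exact (hG0.1.1.2.2.1 e (Finset.mem_filter.mp h).1 hne).1
          · exact hWPu e h
        · intro p hp _
          by_cases hw : p ∈ WS
          · obtain ⟨e0, he0, hse0⟩ := Finset.mem_image.mp hw
            have he0N : e0 ∉ N.dir := fun h => hP.2.2 e0 h (hse0 ▸ hp)
            refine ⟨e0, ⟨Finset.mem_union_right _ he0, he0N, hse0⟩, ?_⟩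
            rintro e' ⟨he', he'N, hse'⟩
            rcases Finset.mem_union.mp he' with h | h
            · exact absurd (hse' ▸ hw) (Finset.mem_filter.mp h).2
            · have hee : (e'.1, e'.2) = (e0.1, e0.2) ∨ (e'.1, e'.2) = (e0.2, e0.1) :=
                Sym2.mk_eq_mk_iff.mp (hse'.trans hse0.symm)
              rcases hee with h' | h'
              · exact h'
              · exfalso
                refine no_swap hnd (a := e0.1) (b := e0.2) (hWPpl e0 he0) ?_
                have := hWPpl e' h
                rwa [show e' = (e0.2, e0.1) from h'] at this
          · obtain ⟨e0, ⟨he0G, he0N, hse0⟩, hu0⟩ := rp_orient hG0 hp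
            refine ⟨e0, ⟨Finset.mem_union_left _
              (Finset.mem_filter.mpr ⟨he0G, by rw [hse0]; exact hw⟩), he0N, hse0⟩, ?_⟩
            rintro e' ⟨he', he'N, hse'⟩
            rcases Finset.mem_union.mp he' with h | h
            · exact hu0 e' ⟨(Finset.mem_filter.mp h).1, he'N, hse'⟩
            · exact absurd (by rw [← hse']; exact Finset.mem_image_of_mem _ h) hw
      have hchain2 : List.Chain G2.dstep u l := by
        apply pairs_chain
        intro e he
        rcases chain_pairs hc e he with hd | hu'
        · show (e.1, e.2) ∈ D
          exact hNsub hd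
        · show (e.1, e.2) ∈ D
          refine Finset.mem_union_right _ (Finset.mem_filter.mpr ⟨List.mem_toFinset.mpr ?_, hu'⟩)
          exact he
      exact hacy G2 hdirects rfl ⟨(x, u), hNsub hxu, chain_rtg hchain2 hlast⟩
    · -- duplicate: shorten the walk
      obtain ⟨s1, s2, s3, a, heq⟩ := dup_split hnd
      have hc' : List.Chain' N.sstep (s1 ++ a :: s2 ++ a :: s3) := by
        have h0 : List.Chain' N.sstep (u :: l) := hc
        rwa [heq] at h0
      obtain ⟨C1, C3, H12⟩ := List.isChain_append.mp hc'
      obtain ⟨D1, D2, HD⟩ := List.isChain_append.mp C1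
      have hm' : List.Chain' N.sstep (s1 ++ a :: s3) := by
        refine List.isChain_append.mpr ⟨D1, C3, ?_⟩
        intro p hp q hq
        simp only [List.head?_cons, Option.mem_def, Option.some_inj] at hq
        subst hq
        exact HD p hp a (by simp)
      have h1 := hlast
      rw [heq, getLast?_append_cons (s1 ++ a :: s2) s3 a] at h1
      have hlast3 : (a :: s3).getLast? = some x := h1
      have hlast' : (s1 ++ a :: s3).getLast? = some x := by
        rw [getLast?_append_cons s1 s3 a]
        exact hlast3
      cases s1 with
      | nil =>
        simp only [List.nil_append, List.cons_append, List.cons.injEq] at heq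
        obtain ⟨rfl, hleq⟩ := heq
        refine ih s3 ?_ C3 hlast3
        have hll : l.length ≤ n + 1 := hl
        rw [hleq] at hll
        simp only [List.length_append, List.length_cons] at hll
        omega
      | cons u' s1' =>
        simp only [List.cons_append, List.cons.injEq] at heq
        obtain ⟨rfl, hleq⟩ := heq
        have hm'' : List.Chain' N.sstep (u :: (s1' ++ a :: s3)) := by
          rw [← List.cons_append]
          exact hm'
        have hlast'' : (u :: (s1' ++ a :: s3)).getLast? = some x := by
          rw [← List.cons_append]
          exact hlast'
        refine ih (s1' ++ a :: s3) ?_ hm'' hlast''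
        rw [hleq] at hl
        simp only [List.length_append, List.length_cons] at hl ⊢
        omega

end Aux18c
section Aux18d
set_option linter.unusedSectionVars false
variable {N G : SDG V}

lemma flip (hP : N.Proper) (hG : RootedPartner G N) {a b : V}
    (hab : (a, b) ∈ G.dir) (hnab : (a, b) ∉ N.dir) (ha : G.ideg a = 0) :
    ∃ G' : SDG V, RootedPartner G' N ∧ G'.dir = insert (b, a) (G.dir.erase (a, b)) ∧
      G'.ideg b = 0 := by
  have hund : s(a, b) ∈ N.undir := rp_new hG hab hnab
  have hne : a ≠ b := proper_ne hP hund
  have hnba : (b, a) ∉ N.dir := fun h =>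
    dir_not_undir hP h (by rw [show s((b, a).1, (b, a).2) = s(a, b) from Sym2.eq_swap]; exact hund)
  have hb1 : G.ideg b ≤ 1 := hyb_le_one hG hab hnab
  set G' : SDG V := ⟨∅, insert (b, a) (G.dir.erase (a, b))⟩ with hG'def
  have hnoB : ∀ z, (z, b) ∉ G'.dir := by
    intro z hz
    rcases Finset.mem_insert.mp hz with h | h
    · exact hne ((Prod.ext_iff.mp h).2).symm
    · have hzb := Finset.mem_of_mem_erase h
      have hza : z = a := ideg_le_one_eq hb1 hzb hab
      exact (Finset.ne_of_mem_erase h) (by rw [hza])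
  have hidb : G'.ideg b = 0 := by
    rw [ideg, Finset.card_eq_zero, Finset.filter_eq_empty_iff]
    intro e he h2
    exact hnoB e.1 (by rw [show (e.1, b) = e from Prod.ext_iff.mpr ⟨rfl, h2.symm⟩]; exact he)
  have hida : G'.ideg a = 1 := by
    have hs : G'.dir.filter (fun e => e.2 = a) = {(b, a)} := by
      apply Finset.eq_singleton_iff_unique_mem.mpr
      constructor
      · exact Finset.mem_filter.mpr ⟨Finset.mem_insert_self _ _, rfl⟩
      · intro e he
        obtain ⟨hm, h2⟩ := Finset.mem_filter.mp he
        rcases Finset.mem_insert.mp hm with h | h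
        · exact h
        · exfalso
          have hmm : e ∈ G.dir.filter (fun e => e.2 = a) :=
            Finset.mem_filter.mpr ⟨Finset.mem_of_mem_erase h, h2⟩
          rw [Finset.card_eq_zero.mp ha] at hmm
          exact Finset.notMem_empty _ hmm
    rw [ideg, hs, Finset.card_singleton]
  have hidz : ∀ z, z ≠ a → z ≠ b →
      G'.dir.filter (fun e => e.2 = z) = G.dir.filter (fun e => e.2 = z) := by
    intro z hza hzb
    ext e
    simp only [hG'def, Finset.mem_filter, Finset.mem_insert, Finset.mem_erase]
    constructor
    · rintro ⟨h | ⟨hne', hm⟩, h2⟩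
      · exfalso; rw [h] at h2; exact hza h2.symm
      · exact ⟨hm, h2⟩
    · rintro ⟨hm, h2⟩
      refine ⟨Or.inr ⟨?_, hm⟩, h2⟩
      rintro rfl; exact hzb h2.symm
  have hhyb : G'.hybridEdges = N.hybridEdges := by
    rw [← rp_hyb hG]
    ext e
    simp only [hybridEdges, Finset.mem_filter]
    by_cases h2a : e.2 = a
    · constructor
      · rintro ⟨hm, hd⟩; exfalso; rw [h2a, hida] at hd; omega
      · rintro ⟨hm, hd⟩; exfalso; rw [h2a, ha] at hd; omega
    · by_cases h2b : e.2 = b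
      · constructor
        · rintro ⟨hm, hd⟩; exfalso; rw [h2b, hidb] at hd; omega
        · rintro ⟨hm, hd⟩; exfalso; rw [h2b] at hd; omega
      · have heq := hidz e.2 h2a h2b
        have hdeq : G'.ideg e.2 = G.ideg e.2 := by rw [ideg, ideg, heq]
        constructor
        · rintro ⟨hm, hd⟩
          refine ⟨?_, by rwa [hdeq] at hd⟩
          rcases Finset.mem_insert.mp hm with h | h
          · exact absurd (by rw [h]) h2a
          · exact Finset.mem_of_mem_erase h
        · rintro ⟨hm, hd⟩
          refine ⟨Finset.mem_insert.mpr (Or.inr (Finset.mem_erase.mpr ⟨?_, hm⟩)),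
            by rwa [hdeq]⟩
          rintro rfl; exact h2b rfl
  have hdirs : Directs N G' := by
    refine ⟨Finset.empty_subset _, ?_, ?_, ?_⟩
    · intro e he
      refine Finset.mem_insert.mpr (Or.inr (Finset.mem_erase.mpr ⟨?_, rp_dirsub hG he⟩))
      rintro rfl; exact hnab he
    · intro e he hne'
      refine ⟨?_, Finset.notMem_empty _⟩
      rcases Finset.mem_insert.mp he with h | h
      · rw [h]; show s(b, a) ∈ N.undir; rw [Sym2.eq_swap]; exact hund
      · exact rp_new hG (Finset.mem_of_mem_erase h) hne'
    · intro p hp _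
      by_cases hpe : p = s(a, b)
      · subst hpe
        refine ⟨(b, a), ⟨Finset.mem_insert_self _ _, hnba, Sym2.eq_swap⟩, ?_⟩
        rintro e' ⟨he', hn', hs'⟩
        rcases (Sym2.mk_eq_mk_iff (q := (a, b))).mp hs' with h' | h'
        · exfalso
          have he'' : e' = (a, b) := h'
          rw [he''] at he'
          rcases Finset.mem_insert.mp he' with h'' | h''
          · exact hne (Prod.ext_iff.mp h'').1
          · exact (Finset.notMem_erase _ _) h''
        · exact h'
      · obtain ⟨e0, ⟨he0, hn0, hs0⟩, hu0⟩ := rp_orient hG hp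
        refine ⟨e0, ⟨Finset.mem_insert.mpr (Or.inr (Finset.mem_erase.mpr ⟨?_, he0⟩)),
          hn0, hs0⟩, ?_⟩
        · rintro rfl; exact hpe hs0.symm
        · rintro e' ⟨he', hn', hs'⟩
          rcases Finset.mem_insert.mp he' with h' | h'
          · exfalso
            rw [h'] at hs'
            exact hpe (hs'.symm.trans Sym2.eq_swap)
          · exact hu0 e' ⟨Finset.mem_of_mem_erase h', hn', hs'⟩
  have hsub : ∀ {x y : V}, Relation.ReflTransGen G'.dstep x y → x ≠ b →
      Relation.ReflTransGen G.dstep x y := by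
    intro x y h
    induction h using Relation.ReflTransGen.head_induction_on with
    | refl => intro _; exact .refl
    | @head x' c' h' hr ih =>
      intro hx
      have hcb : c' ≠ b := by
        rintro rfl
        exact hnoB x' h'
      have hx'G : (x', c') ∈ G.dir := by
        rcases Finset.mem_insert.mp h' with h'' | h''
        · exact absurd (Prod.ext_iff.mp h'').1 hx
        · exact Finset.mem_of_mem_erase h''
      exact .head hx'G (ih hcb)
  have hnc : ¬ G'.HasDirCycle := by
    rintro ⟨e, he, hr⟩
    have he2b : e.2 ≠ b := by
      intro h
      exact hnoB e.1 (by rw [show (e.1, b) = e from Prod.ext_iff.mpr ⟨rfl, h.symm⟩]; exact he)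
    by_cases heba : e = (b, a)
    · rw [heba] at hr
      rcases Relation.ReflTransGen.cases_tail hr with h | ⟨c, _, hcb⟩
      · exact hne h.symm
      · exact hnoB c hcb
    · have heG : e ∈ G.dir := by
        rcases Finset.mem_insert.mp he with h | h
        · exact absurd h heba
        · exact Finset.mem_of_mem_erase h
      exact not_cycle hG ⟨e, heG, hsub hr he2b⟩
  exact ⟨G', mk_rp rfl hdirs hhyb hnc, rfl, hidb⟩

lemma descend (hP : N.Proper) {v : V} : ∀ (l : List V) (G : SDG V) (t : V),
    RootedPartner G N → G.ideg t = 0 →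
    List.Chain (fun x y => (x, y) ∈ G.dir ∧ (x, y) ∉ N.dir) t l →
    (t :: l).getLast? = some v →
    ∃ G', RootedPartner G' N ∧ G'.ideg v = 0 := by
  intro l
  induction l with
  | nil =>
    intro G t hG ht _ hlast
    simp only [List.getLast?_singleton, Option.some_inj] at hlast
    exact ⟨G, hG, hlast ▸ ht⟩
  | cons a1 rest ih =>
    intro G t hG ht hchain hlast
    unfold List.Chain at hchain
    rw [List.chain_cons] at hchain
    obtain ⟨⟨h1G, h1N⟩, hc⟩ := hchain
    obtain ⟨G', hG', hdir, hb⟩ := flip hP hG h1G h1N ht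
    have hta1 : t ≠ a1 := proper_ne hP (rp_new hG h1G h1N)
    have htrans : ∀ (l' : List V) (z : V), z ≠ t →
        List.Chain (fun x y => (x, y) ∈ G.dir ∧ (x, y) ∉ N.dir) z l' →
        List.Chain (fun x y => (x, y) ∈ G'.dir ∧ (x, y) ∉ N.dir) z l' := by
      intro l'
      induction l' with
      | nil => intro z _ _; exact .nil
      | cons y l'' ihaux =>
        intro z hz hcz
        unfold List.Chain at hcz ⊢
        rw [List.chain_cons] at hcz ⊢
        obtain ⟨⟨hzy, hzyN⟩, hrest⟩ := hcz
        have hyt : y ≠ t := by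
          rintro rfl
          exact mem_ideg hzy ht
        refine ⟨⟨?_, hzyN⟩, ihaux y hyt hrest⟩
        rw [hdir]
        refine Finset.mem_insert.mpr (Or.inr (Finset.mem_erase.mpr ⟨?_, hzy⟩))
        intro h; exact hz (Prod.ext_iff.mp h).1
    refine ih G' a1 hG' hb (htrans rest a1 hta1.symm hc) ?_
    rwa [List.getLast?_cons_cons] at hlast

lemma ustep_symm {a b : V} (h : N.ustep a b) : N.ustep b a := by
  show s(b, a) ∈ N.undir
  rw [Sym2.eq_swap]
  exact h

lemma sreach_of_eqvGen {a b : V} (h : Relation.EqvGen N.ustep a b) :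
    N.sreach a b ∧ N.sreach b a := by
  induction h with
  | rel x y hxy =>
    exact ⟨.single (Or.inr hxy), .single (Or.inr (ustep_symm hxy))⟩
  | refl x => exact ⟨.refl, .refl⟩
  | symm x y _ ih => exact ⟨ih.2, ih.1⟩
  | trans x y z _ _ ih1 ih2 => exact ⟨ih1.1.trans ih2.1, ih2.2.trans ih1.2⟩

lemma nstep_extend (hP : N.Proper) (hG : RootedPartner G N) {v : V} (hv : G.ideg v = 0)
    {a b : V} (hu : N.ustep a b)
    (ha : Relation.ReflTransGen (fun x y => (x, y) ∈ G.dir ∧ (x, y) ∉ N.dir) v a) :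
    Relation.ReflTransGen (fun x y => (x, y) ∈ G.dir ∧ (x, y) ∉ N.dir) v b := by
  have hund : s(a, b) ∈ N.undir := hu
  obtain ⟨e, ⟨heG, heN, hes⟩, _⟩ := rp_orient hG hund
  rcases (Sym2.mk_eq_mk_iff (q := (a, b))).mp hes with h' | h'
  · have he' : e = (a, b) := h'
    rw [he'] at heG heN
    exact ha.tail ⟨heG, heN⟩
  · have he' : e = (b, a) := h'
    rw [he'] at heG heN
    have hle : G.ideg a ≤ 1 := hyb_le_one hG heG heN
    rcases Relation.ReflTransGen.cases_tail ha with h | ⟨c, hvc, hca⟩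
    · exfalso
      rw [h] at heG
      exact mem_ideg heG hv
    · have hcb : c = b := ideg_le_one_eq hle hca.1 heG
      rwa [hcb] at hvc

lemma nreach_comp (hP : N.Proper) (hG : RootedPartner G N) {v : V} (hv : G.ideg v = 0) :
    ∀ {z : V}, Relation.EqvGen N.ustep v z →
      Relation.ReflTransGen (fun x y => (x, y) ∈ G.dir ∧ (x, y) ∉ N.dir) v z := by
  suffices h : ∀ a b, Relation.EqvGen N.ustep a b →
      (Relation.ReflTransGen (fun x y => (x, y) ∈ G.dir ∧ (x, y) ∉ N.dir) v a →
        Relation.ReflTransGen (fun x y => (x, y) ∈ G.dir ∧ (x, y) ∉ N.dir) v b) ∧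
      (Relation.ReflTransGen (fun x y => (x, y) ∈ G.dir ∧ (x, y) ∉ N.dir) v b →
        Relation.ReflTransGen (fun x y => (x, y) ∈ G.dir ∧ (x, y) ∉ N.dir) v a) by
    intro z hz
    exact (h v z hz).1 .refl
  intro a b h
  induction h with
  | rel x y hxy =>
    exact ⟨fun h => nstep_extend hP hG hv hxy h,
      fun h => nstep_extend hP hG hv (ustep_symm hxy) h⟩
  | refl x => exact ⟨id, id⟩
  | symm x y _ ih => exact ⟨ih.2, ih.1⟩
  | trans x y z _ _ ih1 ih2 => exact ⟨fun h => ih2.1 (ih1.1 h), fun h => ih1.2 (ih2.2 h)⟩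

end Aux18d
theorem statement_18 {V : Type} [DecidableEq V] (N : SDG V) (hP : N.Proper)
    (hN : IsNetwork N) (v : V) :
    (IsUnrootedLeaf N v ∧ ¬ IsRootedLeaf N v) ↔
      (InRootComp N v ∧ N.udeg v = 1 ∧ N.ideg v = 0 ∧ N.odeg v = 0) := by
  classical
  constructor
  · rintro ⟨⟨G1, hG1, hod1⟩, hnr⟩
    unfold IsRootedLeaf at hnr
    push_neg at hnr
    obtain ⟨G2, hG2, hod2⟩ := hnr
    have hodN : N.odeg v = 0 := by
      have hsub : N.dir.filter (fun e => e.1 = v) ⊆ G1.dir.filter (fun e => e.1 = v) :=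
        Finset.filter_subset_filter _ (rp_dirsub hG1)
      have h2 : N.odeg v ≤ G1.odeg v := Finset.card_le_card hsub
      omega
    have hNout : ∀ b, (v, b) ∉ N.dir := fun b hb => mem_odeg hb hodN
    obtain ⟨w, hvw2⟩ := exists_out_of_odeg hod2
    have hvwN : (v, w) ∉ N.dir := hNout w
    have hundvw : s(v, w) ∈ N.undir := rp_new hG2 hvw2 hvwN
    have hvnw : v ≠ w := proper_ne hP hundvw
    have hinto : ∀ p ∈ N.undir, v ∈ p →
        ∃ c, p = s(v, c) ∧ (c, v) ∈ G1.dir ∧ (c, v) ∉ N.dir := by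
      intro p hp hvp
      obtain ⟨c, rfl⟩ := Sym2.mem_iff_exists.mp hvp
      obtain ⟨e, ⟨heG, heN, hes⟩, _⟩ := rp_orient hG1 hp
      rcases (Sym2.mk_eq_mk_iff (q := (v, c))).mp hes with h' | h'
      · exfalso
        have he' : e = (v, c) := h'
        rw [he'] at heG
        exact mem_odeg heG hod1
      · have he' : e = (c, v) := h'
        rw [he'] at heG heN
        exact ⟨c, rfl, heG, heN⟩
    have hidN : N.ideg v = 0 := by
      by_contra h
      obtain ⟨c0, hc0⟩ := exists_in_of_ideg h
      obtain ⟨w0, hps, hw0G, hw0N⟩ := hinto s(v, w) hundvw (Sym2.mem_mk_left _ _)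
      have hcw : c0 ≠ w0 := by rintro rfl; exact hw0N hc0
      have h2 : 2 ≤ G1.ideg v := two_le_ideg (rp_dirsub hG1 hc0) hw0G hcw
      have hmem : (w0, v) ∈ G1.hybridEdges := Finset.mem_filter.mpr ⟨hw0G, h2⟩
      rw [rp_hyb hG1] at hmem
      exact hw0N (Finset.mem_filter.mp hmem).1
    have hvmem : s(v, w) ∈ N.undir.filter (fun p => v ∈ p) :=
      Finset.mem_filter.mpr ⟨hundvw, Sym2.mem_mk_left _ _⟩
    have hudle : N.udeg v ≤ 1 := by
      rw [udeg]
      apply Finset.card_le_one.mpr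
      intro p hp q hq
      obtain ⟨hp1, hp2⟩ := Finset.mem_filter.mp hp
      obtain ⟨hq1, hq2⟩ := Finset.mem_filter.mp hq
      obtain ⟨cp, hpe, hpG, hpN⟩ := hinto p hp1 hp2
      obtain ⟨cq, hqe, hqG, hqN⟩ := hinto q hq1 hq2
      by_cases hcc : cp = cq
      · rw [hpe, hqe, hcc]
      · exfalso
        have h2 : 2 ≤ G1.ideg v := two_le_ideg hpG hqG hcc
        have hmem : (cp, v) ∈ G1.hybridEdges := Finset.mem_filter.mpr ⟨hpG, h2⟩
        rw [rp_hyb hG1] at hmem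
        exact hpN (Finset.mem_filter.mp hmem).1
    have hud : N.udeg v = 1 := by
      have h1 : 0 < N.udeg v := Finset.card_pos.mpr ⟨_, hvmem⟩
      omega
    have huniq : ∀ p ∈ N.undir, v ∈ p → p = s(v, w) := by
      intro p hp hvp
      exact Finset.card_le_one.mp (le_of_eq hud) p (Finset.mem_filter.mpr ⟨hp, hvp⟩) _ hvmem
    have hidG2 : G2.ideg v = 0 := by
      rw [ideg, Finset.card_eq_zero, Finset.filter_eq_empty_iff]
      intro e he h2
      have heN : e ∉ N.dir := by
        intro h
        have h' : (e.1, v) ∈ N.dir := by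
          rw [show (e.1, v) = e from Prod.ext_iff.mpr ⟨rfl, h2.symm⟩]; exact h
        exact mem_ideg h' hidN
      have hse : s(e.1, e.2) ∈ N.undir := rp_new hG2 he heN
      have hsv : s(e.1, e.2) = s(v, w) := huniq _ hse (by rw [h2]; exact Sym2.mem_mk_right _ _)
      rcases (Sym2.mk_eq_mk_iff (q := (v, w))).mp hsv with h' | h'
      · have hvw : e.2 = w := (Prod.ext_iff.mp h').2
        exact hvnw (h2.symm.trans hvw)
      · have he1 : e.1 = w := (Prod.ext_iff.mp h').1
        have hwv : (w, v) ∈ G2.dir := by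
          rw [show (w, v) = e from Prod.ext_iff.mpr ⟨he1.symm, h2.symm⟩]; exact he
        exact not_both hP hG2 hvw2 hvwN hwv
    have hnodir : ∀ c z, (c, z) ∈ N.dir → Relation.EqvGen N.ustep v z → False := by
      intro c z hcz hvz
      have hnz := nreach_comp hP hG2 hidG2 hvz
      rcases Relation.ReflTransGen.cases_tail hnz with h | ⟨d, _, hdz⟩
      · rw [h] at hcz
        exact mem_ideg hcz hidN
      · have hle : G2.ideg z ≤ 1 := hyb_le_one hG2 hdz.1 hdz.2
        have hcd : c = d := ideg_le_one_eq hle (rp_dirsub hG2 hcz) hdz.1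
        rw [hcd] at hcz
        exact hdz.2 hcz
    refine ⟨?_, hud, hidN, hodN⟩
    intro u hu
    have hEq : Relation.EqvGen N.ustep u v := by
      induction hu using Relation.ReflTransGen.head_induction_on with
      | refl => exact .refl v
      | @head x c h' hr ih =>
        rcases (show N.dstep x c ∨ N.ustep x c from h') with hd | hust
        · exact (hnodir x c hd (Relation.EqvGen.symm _ _ ih)).elim
        · exact .trans _ _ _ (.rel _ _ hust) ih
    exact (sreach_of_eqvGen hEq).2
  · rintro ⟨hrc, hud, hidN, hodN⟩
    obtain ⟨hacy, G, hG⟩ := hN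
    have hpos : 0 < (N.undir.filter (fun p => v ∈ p)).card := by
      have : (N.undir.filter (fun p => v ∈ p)).card = N.udeg v := rfl
      omega
    obtain ⟨p0, hp0⟩ := Finset.card_pos.mp hpos
    obtain ⟨hp0u, hp0v⟩ := Finset.mem_filter.mp hp0
    obtain ⟨w, rfl⟩ := Sym2.mem_iff_exists.mp hp0v
    have hvnw : v ≠ w := proper_ne hP hp0u
    have huniq : ∀ q ∈ N.undir, v ∈ q → q = s(v, w) := by
      intro q hq hvq
      exact Finset.card_le_one.mp (le_of_eq hud) q (Finset.mem_filter.mpr ⟨hq, hvq⟩) _ hp0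
    have hNout : ∀ b, (v, b) ∉ N.dir := fun b hb => mem_odeg hb hodN
    have hNin : ∀ c, (c, v) ∉ N.dir := fun c hc => mem_ideg hc hidN
    have hout_only : ∀ (H : SDG V), RootedPartner H N → ∀ b, (v, b) ∈ H.dir → b = w := by
      intro H hH b hb
      have hbu : s(v, b) ∈ N.undir := rp_new hH hb (hNout b)
      have heq := huniq _ hbu (Sym2.mem_mk_left _ _)
      rcases (Sym2.mk_eq_mk_iff (p := (v, b)) (q := (v, w))).mp heq with h' | h'
      · exact (Prod.ext_iff.mp h').2
      · exact absurd (Prod.ext_iff.mp h').1 hvnw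
    have hin_only : ∀ (H : SDG V), RootedPartner H N → ∀ c, (c, v) ∈ H.dir → c = w := by
      intro H hH c hc
      have hcu : s(c, v) ∈ N.undir := rp_new hH hc (hNin c)
      have heq := huniq _ hcu (Sym2.mem_mk_right _ _)
      rcases (Sym2.mk_eq_mk_iff (p := (c, v)) (q := (v, w))).mp heq with h' | h'
      · exact absurd (show v = w from (Prod.ext_iff.mp h').2) hvnw
      · exact (Prod.ext_iff.mp h').1
    obtain ⟨e, ⟨heG, heN, hes⟩, _⟩ := rp_orient hG hp0u
    rcases (Sym2.mk_eq_mk_iff (q := (v, w))).mp hes with hor | hor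
    · -- pendant directed v → w in G
      have hvwG : (v, w) ∈ G.dir := by
        rw [show (v, w) = e from (show e = (v, w) from hor).symm]; exact heG
      have hvwN : (v, w) ∉ N.dir := hNout w
      have hidGv : G.ideg v = 0 := by
        rw [ideg, Finset.card_eq_zero, Finset.filter_eq_empty_iff]
        intro e' he' h2
        have he'' : (e'.1, v) ∈ G.dir := by
          rw [show (e'.1, v) = e' from Prod.ext_iff.mpr ⟨rfl, h2.symm⟩]; exact he'
        have h1w : e'.1 = w := hin_only G hG e'.1 he''
        rw [h1w] at he''
        exact not_both hP hG hvwG hvwN he''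
      obtain ⟨G', hG', hdir', _⟩ := flip hP hG hvwG hvwN hidGv
      constructor
      · refine ⟨G', hG', ?_⟩
        rw [odeg, Finset.card_eq_zero, Finset.filter_eq_empty_iff]
        intro e' he' h1
        rw [hdir'] at he'
        rcases Finset.mem_insert.mp he' with h | h
        · exact hvnw ((Prod.ext_iff.mp h).1.symm.trans h1).symm
        · have hG'' : (v, e'.2) ∈ G.dir := by
            rw [show (v, e'.2) = e' from Prod.ext_iff.mpr ⟨h1.symm, rfl⟩]
            exact Finset.mem_of_mem_erase h
          have hb : e'.2 = w := hout_only G hG e'.2 hG''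
          exact (Finset.ne_of_mem_erase h) (Prod.ext_iff.mpr ⟨h1, hb⟩)
      · intro hrl
        exact mem_odeg hvwG (hrl G hG)
    · -- pendant directed w → v in G
      have hwvG : (w, v) ∈ G.dir := by
        rw [show (w, v) = e from (show e = (w, v) from hor).symm]; exact heG
      have hwvN : (w, v) ∉ N.dir := hNin w
      constructor
      · refine ⟨G, hG, ?_⟩
        rw [odeg, Finset.card_eq_zero, Finset.filter_eq_empty_iff]
        intro e' he' h1
        have he'' : (v, e'.2) ∈ G.dir := by
          rw [show (v, e'.2) = e' from Prod.ext_iff.mpr ⟨h1.symm, rfl⟩]; exact he'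
        have hbw : e'.2 = w := hout_only G hG e'.2 he''
        rw [hbw] at he''
        exact not_both hP hG hwvG hwvN he''
      · intro hrl
        set ns : V → V → Prop := fun x y => (x, y) ∈ G.dir ∧ (x, y) ∉ N.dir with hns
        set F2 : Finset V := insert v ((G.dir.image Prod.fst) ∪ (G.dir.image Prod.snd))
          with hF2
        set U : Finset V := F2.filter (fun z => Relation.ReflTransGen ns z v) with hUdef
        have hvU : v ∈ U := Finset.mem_filter.mpr ⟨Finset.mem_insert_self _ _, .refl⟩
        obtain ⟨t, htU, hmax⟩ := Finset.exists_max_image U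
          (fun z => (F2.filter (fun x => G.dreach z x)).card) ⟨v, hvU⟩
        have htv : Relation.ReflTransGen ns t v := (Finset.mem_filter.mp htU).2
        have hnonew : ∀ c, (c, t) ∈ G.dir → (c, t) ∈ N.dir := by
          intro c hc
          by_contra hcn
          have hcF2 : c ∈ F2 := Finset.mem_insert.mpr (Or.inr
            (Finset.mem_union_left _ (Finset.mem_image.mpr ⟨(c, t), hc, rfl⟩)))
          have hcU : c ∈ U := Finset.mem_filter.mpr ⟨hcF2, .head ⟨hc, hcn⟩ htv⟩
          have hsub : F2.filter (fun x => G.dreach t x) ⊆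
              F2.filter (fun x => G.dreach c x) := by
            intro x hx
            obtain ⟨h1, h2⟩ := Finset.mem_filter.mp hx
            exact Finset.mem_filter.mpr ⟨h1, (Relation.ReflTransGen.single hc).trans h2⟩
          have hcin : c ∈ F2.filter (fun x => G.dreach c x) :=
            Finset.mem_filter.mpr ⟨hcF2, .refl⟩
          have hcnin : c ∉ F2.filter (fun x => G.dreach t x) := by
            intro hmem
            exact not_cycle hG ⟨(c, t), hc, (Finset.mem_filter.mp hmem).2⟩
          have hlt := Finset.card_lt_card
            ((Finset.ssubset_iff_of_subset hsub).mpr ⟨c, hcin, hcnin⟩)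
          have hle := hmax c hcU
          omega
        by_cases hti : G.ideg t = 0
        · obtain ⟨l, hcl, hll⟩ := rtg_chain htv
          obtain ⟨G', hG', hid'⟩ := descend hP l G t hG hti hcl hll
          obtain ⟨e2, ⟨he2G, he2N, he2s⟩, _⟩ := rp_orient hG' hp0u
          rcases (Sym2.mk_eq_mk_iff (q := (v, w))).mp he2s with h2 | h2
          · have hvw' : (v, w) ∈ G'.dir := by
              rw [show (v, w) = e2 from (show e2 = (v, w) from h2).symm]; exact he2G
            exact mem_odeg hvw' (hrl G' hG')
          · have hwv' : (w, v) ∈ G'.dir := by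
              rw [show (w, v) = e2 from (show e2 = (w, v) from h2).symm]; exact he2G
            exact mem_ideg hwv' hid'
        · obtain ⟨c, hct⟩ := exists_in_of_ideg hti
          have hctN : (c, t) ∈ N.dir := hnonew c hct
          have hstv : N.sreach t v := Relation.ReflTransGen.mono
            (fun x y h => Or.inr (show N.ustep x y from rp_new hG (e := (x, y)) h.1 h.2)) _ _ htv
          have hscv : N.sreach c v := .head (Or.inl hctN) hstv
          have hsvc := hrc c hscv
          exact not_sreach_of_dir hP ⟨hacy, G, hG⟩ hctN (hstv.trans hsvc)

end SDG
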